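/- Under the kernel moment condition on L, for the product circular kernel constants c_{h,j,k}(L) = 2^d ∏_{ℓ=1}^d ∫₀^π L^k((1−cos θ_ℓ)/h_ℓ²) θ_ℓ^{j_ℓ} dθ_ℓ, it holds that lim_{h→0} c_{h,j,k}(L)/(h^j ρ(h)) = 2^{(3d+|j|)/2} ∏_{ℓ=1}^d ∫₀^∞ L^k(r²) r^{j_ℓ} dr, where h^j = ∏ h_ℓ^{j_ℓ}, ρ(h) = ∏ h_ℓ, and |j| = Σ j_ℓ. -/

import Mathlib

/-!
The integral factorizes over the coordinates, so it suffices to treat one bandwidth `h → 0⁺`.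
Substituting `θ = h u` turns `(∫₀^π L((1 - cos θ)/h²)^k θ^j dθ) / h^(j+1)` into
`∫₀^(π/h) L((1 - cos hu)/h²)^k u^j du`. Since `(1 - cos hu)/h² = (u²/2) sinc(hu/2)² → u²/2` and a
monotone `L` is continuous off a countable set, the integrand tends a.e. to `L(u²/2)^k u^j`; the
bound `1 - cos t ≥ 2t²/π²` on `[0, π]` and monotonicity give the integrable majorant
`L(2u²/π²)^k u^j`, so dominated convergence applies. Finally `u = √2 r` gives the factor
`√2^(j+1)`, and `2^d ∏ √2^(j_ℓ+1) = 2^((3d + |j|)/2)`.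
-/

open MeasureTheory Filter Set Real Topology

lemma one_sub_cos_eq_two_mul_sin_sq (x : ℝ) : 1 - cos x = 2 * sin (x / 2) ^ 2 := by
  conv_lhs => rw [← mul_div_cancel₀ x two_ne_zero, cos_two_mul, cos_sq']
  ring

lemma one_sub_cos_mul_div_sq {h : ℝ} (hh : h ≠ 0) (u : ℝ) :
    (1 - cos (h * u)) / h ^ 2 = u ^ 2 / 2 * sinc (h * u / 2) ^ 2 := by
  rcases eq_or_ne u 0 with rfl | hu
  · simp
  rw [one_sub_cos_eq_two_mul_sin_sq, sinc_of_ne_zero (by positivity)]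
  field_simp

lemma tendsto_one_sub_cos_mul_div_sq (u : ℝ) :
    Tendsto (fun h => (1 - cos (h * u)) / h ^ 2) (𝓝[≠] 0) (𝓝 (u ^ 2 / 2)) := by
  have hcont : Continuous fun h => u ^ 2 / 2 * sinc (h * u / 2) ^ 2 := by fun_prop
  have hlim := (hcont.tendsto 0).mono_left (nhdsWithin_le_nhds (s := {0}ᶜ))
  rw [zero_mul, zero_div, sinc_zero, one_pow, mul_one] at hlim
  refine hlim.congr' ?_
  filter_upwards [self_mem_nhdsWithin] with h hh
  exact (one_sub_cos_mul_div_sq hh u).symm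

lemma mul_sq_le_one_sub_cos_mul_div_sq {h u : ℝ} (hh : 0 < h) (hu : 0 ≤ u) (hhu : h * u ≤ π) :
    2 / π ^ 2 * u ^ 2 ≤ (1 - cos (h * u)) / h ^ 2 := by
  have hcos := cos_le_one_sub_mul_cos_sq (x := h * u) (by rwa [abs_of_nonneg (by positivity)])
  rw [le_div_iff₀ (by positivity)]
  linarith [show 2 / π ^ 2 * u ^ 2 * h ^ 2 = 2 / π ^ 2 * (h * u) ^ 2 by ring]

lemma setIntegral_Ioc_mul_pow_div_pow (f : ℝ → ℝ) {a h : ℝ} (ha : 0 ≤ a) (hh : 0 < h) (j : ℕ) :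
    (∫ θ in Ioc 0 a, f θ * θ ^ j) / h ^ (j + 1) = ∫ u in Ioc 0 (a / h), f (h * u) * u ^ j := by
  rw [← intervalIntegral.integral_of_le ha, ← intervalIntegral.integral_of_le (by positivity)]
  have hscale := intervalIntegral.integral_comp_mul_left (fun θ => f θ * θ ^ j) (a := 0)
    (b := a / h) hh.ne'
  rw [mul_zero, mul_div_cancel₀ _ hh.ne'] at hscale
  simp only [mul_pow, mul_left_comm _ (h ^ j), intervalIntegral.integral_const_mul,
    smul_eq_mul] at hscale
  rw [pow_succ, ← div_div, div_eq_iff (by positivity), div_eq_iff (by positivity)]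
  field_simp at hscale
  linear_combination -hscale

lemma integral_comp_sq_div_two_mul_pow (g : ℝ → ℝ) (j : ℕ) :
    ∫ u in Ioi 0, g (u ^ 2 / 2) * u ^ j = √2 ^ (j + 1) * ∫ r in Ioi 0, g (r ^ 2) * r ^ j := by
  have hscale := integral_comp_mul_left_Ioi (fun r => g (r ^ 2) * r ^ j) 0 (b := (√2)⁻¹)
    (by positivity)
  have hsq : ∀ u : ℝ, ((√2)⁻¹ * u) ^ 2 = u ^ 2 / 2 := fun u => by
    rw [mul_pow, inv_pow, sq_sqrt zero_le_two]; ring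
  simp only [hsq, mul_zero, inv_inv, smul_eq_mul, mul_pow, mul_left_comm _ ((√2)⁻¹ ^ j),
    integral_const_mul] at hscale
  rw [pow_succ, mul_assoc, ← hscale, ← mul_assoc, ← mul_pow, mul_inv_cancel₀ (by positivity),
    one_pow, one_mul]

lemma IntegrableOn.comp_mul_sq_mul_pow {g : ℝ → ℝ} {j : ℕ}
    (hg : IntegrableOn (fun r => g (r ^ 2) * r ^ j) (Ioi 0)) {c : ℝ} (hc : 0 < c) :
    IntegrableOn (fun u => g (c * u ^ 2) * u ^ j) (Ioi 0) := by
  have hb := (integrableOn_Ioi_comp_mul_left_iff _ 0 (sqrt_pos.2 hc)).2 (by rwa [mul_zero])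
  refine IntegrableOn.congr_fun (hb.const_mul ((√c ^ j)⁻¹)) (fun u _ => ?_) measurableSet_Ioi
  simp only [mul_pow, sq_sqrt hc.le]
  field_simp

lemma Antitone.ae_continuousAt_sq_div_two {L : ℝ → ℝ} (hL : Antitone L) :
    ∀ᵐ u ∂volume.restrict (Ioi 0), ContinuousAt L (u ^ 2 / 2) := by
  rw [ae_restrict_iff' measurableSet_Ioi]
  have hbad : {u : ℝ | 0 < u ∧ ¬ContinuousAt L (u ^ 2 / 2)}.Countable := by
    refine (hL.countable_not_continuousAt.image fun x => √(2 * x)).mono ?_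
    rintro u ⟨hu, hdisc⟩
    refine ⟨u ^ 2 / 2, hdisc, ?_⟩
    change √(2 * (u ^ 2 / 2)) = u
    rw [mul_div_cancel₀ _ two_ne_zero, sqrt_sq hu.le]
  filter_upwards [hbad.ae_notMem volume] with u hu hu0
  by_contra hdisc
  exact hu ⟨hu0, hdisc⟩

lemma tendsto_indicator_one_sub_cos_mul_div_sq {L : ℝ → ℝ} {u : ℝ} (hu : 0 < u)
    (hL : ContinuousAt L (u ^ 2 / 2)) (k j : ℕ) :
    Tendsto (fun h => (Ioc 0 (π / h)).indicator
        (fun v => L ((1 - cos (h * v)) / h ^ 2) ^ k * v ^ j) u)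
      (𝓝[>] 0) (𝓝 (L (u ^ 2 / 2) ^ k * u ^ j)) := by
  have hlim := ((hL.tendsto.comp ((tendsto_one_sub_cos_mul_div_sq u).mono_left
    (nhdsGT_le_nhdsNE 0))).pow k).mul_const (u ^ j)
  refine hlim.congr' ?_
  filter_upwards [Ioo_mem_nhdsGT (show 0 < π / u by positivity)] with h ⟨hh, hhu⟩
  have hmem : u ∈ Ioc 0 (π / h) := by
    rw [lt_div_iff₀ hu] at hhu
    exact ⟨hu, (le_div_iff₀' hh).2 (by linarith)⟩
  rw [indicator_of_mem hmem]
  rfl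

lemma AntitoneOn.antitone_comp_max_zero {L : ℝ → ℝ} (hL : AntitoneOn L (Ici 0)) :
    Antitone fun x => L (max x 0) := fun _ _ hab =>
  hL (mem_Ici.2 (le_max_right _ _)) (mem_Ici.2 (le_max_right _ _)) (max_le_max hab le_rfl)

theorem tendsto_setIntegral_cos_kernel_div_pow_of_antitone {L : ℝ → ℝ} (hL : Antitone L)
    (hL0 : ∀ r, 0 ≤ L r) {k j : ℕ}
    (hint : IntegrableOn (fun r => L (r ^ 2) ^ k * r ^ j) (Ioi 0)) :
    Tendsto (fun h => (∫ θ in Ioc 0 π, L ((1 - cos θ) / h ^ 2) ^ k * θ ^ j) / h ^ (j + 1))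
      (𝓝[>] 0) (𝓝 (√2 ^ (j + 1) * ∫ r in Ioi 0, L (r ^ 2) ^ k * r ^ j)) := by
  set F : ℝ → ℝ → ℝ := fun h =>
    (Ioc 0 (π / h)).indicator fun u => L ((1 - cos (h * u)) / h ^ 2) ^ k * u ^ j
  have hF : ∀ᶠ h in 𝓝[>] 0, ∫ u in Ioi 0, F h u =
      (∫ θ in Ioc 0 π, L ((1 - cos θ) / h ^ 2) ^ k * θ ^ j) / h ^ (j + 1) := by
    filter_upwards [self_mem_nhdsWithin] with h hh
    rw [integral_indicator measurableSet_Ioc, Measure.restrict_restrict measurableSet_Ioc,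
      inter_eq_left.2 Ioc_subset_Ioi_self, setIntegral_Ioc_mul_pow_div_pow _ pi_pos.le hh]
  have hmeas (h : ℝ) : AEStronglyMeasurable (F h) (volume.restrict (Ioi 0)) :=
    ((((hL.measurable.comp (by fun_prop)).pow_const k).mul (by fun_prop)).indicator
      measurableSet_Ioc).aestronglyMeasurable
  have hdom : ∀ᶠ h in 𝓝[>] 0, ∀ᵐ u ∂volume.restrict (Ioi 0),
      ‖F h u‖ ≤ L (2 / π ^ 2 * u ^ 2) ^ k * u ^ j := by
    filter_upwards [self_mem_nhdsWithin] with h (hh : 0 < h)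
    filter_upwards [ae_restrict_mem measurableSet_Ioi] with u (hu : 0 < u)
    by_cases hmem : u ∈ Ioc 0 (π / h)
    · have hhu : h * u ≤ π := (le_div_iff₀' hh).1 hmem.2
      simp only [F, indicator_of_mem hmem]
      rw [norm_of_nonneg (by have := hL0 ((1 - cos (h * u)) / h ^ 2); positivity)]
      gcongr
      · exact hL0 _
      · exact hL (mul_sq_le_one_sub_cos_mul_div_sq hh hu.le hhu)
    · simp only [F, indicator_of_notMem hmem, norm_zero]
      exact mul_nonneg (pow_nonneg (hL0 _) _) (pow_nonneg hu.le _)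
  have hlim : ∀ᵐ u ∂volume.restrict (Ioi 0),
      Tendsto (F · u) (𝓝[>] 0) (𝓝 (L (u ^ 2 / 2) ^ k * u ^ j)) := by
    filter_upwards [ae_restrict_mem measurableSet_Ioi, hL.ae_continuousAt_sq_div_two]
      with u hu hcont
    exact tendsto_indicator_one_sub_cos_mul_div_sq hu hcont k j
  rw [← integral_comp_sq_div_two_mul_pow (fun x => L x ^ k)]
  exact (tendsto_integral_filter_of_dominated_convergence _ (.of_forall hmeas) hdom
    (IntegrableOn.comp_mul_sq_mul_pow (g := fun x => L x ^ k) hint (by positivity)) hlim).congr'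
    hF

theorem tendsto_setIntegral_cos_kernel_div_pow {L : ℝ → ℝ} (hL : AntitoneOn L (Ici 0))
    (hL0 : ∀ r, 0 ≤ L r) {k j : ℕ}
    (hint : IntegrableOn (fun r => L (r ^ 2) ^ k * r ^ j) (Ioi 0)) :
    Tendsto (fun h => (∫ θ in Ioc 0 π, L ((1 - cos θ) / h ^ 2) ^ k * θ ^ j) / h ^ (j + 1))
      (𝓝[>] 0) (𝓝 (√2 ^ (j + 1) * ∫ r in Ioi 0, L (r ^ 2) ^ k * r ^ j)) := by
  have hL' (x : ℝ) (hx : 0 ≤ x) : L (max x 0) = L x := by rw [max_eq_left hx]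
  have hcos (h θ : ℝ) : 0 ≤ (1 - cos θ) / h ^ 2 :=
    div_nonneg (by linarith [cos_le_one θ]) (sq_nonneg h)
  convert tendsto_setIntegral_cos_kernel_div_pow_of_antitone hL.antitone_comp_max_zero
    (fun _ => hL0 _) (k := k) (j := j) ?_ using 6
  · rw [hL' _ (hcos _ _)]
  · rw [hL' _ (sq_nonneg _)]
  · simpa only [hL' _ (sq_nonneg _)] using hint

lemma tendsto_apply_nhdsWithin_pos {ι : Type*} (i : ι) :
    Tendsto (fun x : ι → ℝ => x i) (𝓝[{x | ∀ i, 0 < x i}] 0) (𝓝[>] 0) :=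
  tendsto_nhdsWithin_iff.2 ⟨((continuous_apply i).tendsto' 0 0 rfl).mono_left nhdsWithin_le_nhds,
    eventually_nhdsWithin_of_forall fun _ hx => hx i⟩

lemma mul_prod_div_prod_pow_mul_prod {ι K : Type*} [Field K] (s : Finset ι) (c : K) (a b : ι → K)
    (m : ι → ℕ) :
    (c * ∏ i ∈ s, a i) / ((∏ i ∈ s, b i ^ m i) * ∏ i ∈ s, b i) =
      c * ∏ i ∈ s, a i / b i ^ (m i + 1) := by
  simp_rw [mul_div_assoc, ← Finset.prod_mul_distrib, ← pow_succ, Finset.prod_div_distrib]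

lemma two_rpow_three_mul_card_add_sum_div_two {ι : Type*} [Fintype ι] (m : ι → ℕ) :
    (2 : ℝ) ^ (((3 * Fintype.card ι + ∑ i, m i : ℕ) : ℝ) / 2) =
      2 ^ Fintype.card ι * ∏ i, √2 ^ (m i + 1) := by
  have hhalf (n : ℕ) : (2 : ℝ) ^ ((n : ℝ) / 2) = √2 ^ n := by
    rw [sqrt_eq_rpow, ← rpow_natCast, ← rpow_mul zero_le_two]
    ring_nf
  rw [hhalf, Finset.prod_pow_eq_pow_sum, Finset.sum_add_distrib, Finset.sum_const, smul_eq_mul,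
    mul_one, Finset.card_univ, show 3 * Fintype.card ι + ∑ i, m i =
      2 * Fintype.card ι + (∑ i, m i + Fintype.card ι) by ring, pow_add, pow_mul,
    sq_sqrt zero_le_two]

theorem stmt_13_general (d : ℕ) (L : ℝ → ℝ)
    (hmono : AntitoneOn L (Set.Ici 0)) (hnn : ∀ r, 0 ≤ L r)
    (hint : ∀ k : ℕ, (k = 1 ∨ k = 2) → ∀ j : ℕ,
      MeasureTheory.IntegrableOn (fun r => L (r ^ 2) ^ k * r ^ j) (Set.Ioi (0:ℝ)))
    (k : ℕ) (hk : k = 1 ∨ k = 2) (j : Fin d → ℕ) :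
    Filter.Tendsto
      (fun h : Fin d → ℝ =>
        ((2:ℝ) ^ d *
            ∏ ℓ, ∫ θ in Set.Ioc (0:ℝ) Real.pi,
              L ((1 - Real.cos θ) / (h ℓ) ^ 2) ^ k * θ ^ (j ℓ)) /
          ((∏ ℓ, (h ℓ) ^ (j ℓ)) * ∏ ℓ, h ℓ))
      (nhdsWithin 0 {h : Fin d → ℝ | ∀ ℓ, 0 < h ℓ})
      (nhds ((2:ℝ) ^ (((3 * d + ∑ ℓ, j ℓ : ℕ) : ℝ) / 2) *
        ∏ ℓ, ∫ r in Set.Ioi (0:ℝ), L (r ^ 2) ^ k * r ^ (j ℓ))) := by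
  have hconst := two_rpow_three_mul_card_add_sum_div_two j
  rw [Fintype.card_fin] at hconst
  simp_rw [mul_prod_div_prod_pow_mul_prod, hconst, mul_assoc, ← Finset.prod_mul_distrib]
  exact (tendsto_finsetProd _ fun ℓ _ => (tendsto_setIntegral_cos_kernel_div_pow hmono hnn
    (hint k hk (j ℓ))).comp (tendsto_apply_nhdsWithin_pos ℓ)).const_mul _

/-- multivariate kernel moment limit. With
`c_{h,j,k}(L) = 2^d ∏_ℓ ∫₀^π L^k((1−cos θ_ℓ)/h_ℓ²) θ_ℓ^{j_ℓ} dθ_ℓ`, as the bandwidth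
vector `h → 0` (componentwise positive),
`c_{h,j,k}(L)/(h^j ρ(h)) → 2^{(3d+|j|)/2} ∏_ℓ ∫₀^∞ L^k(r²) r^{j_ℓ} dr`,
where `h^j = ∏ h_ℓ^{j_ℓ}`, `ρ(h) = ∏ h_ℓ` and `|j| = Σ j_ℓ`. -/
theorem stmt_13 (d : ℕ) (L : ℝ → ℝ)
    (hmono : AntitoneOn L (Set.Ici 0)) (hnn : ∀ r, 0 ≤ L r)
    (hint : ∀ k : ℕ, (k = 1 ∨ k = 2) → ∀ j : ℕ,
      MeasureTheory.IntegrableOn (fun r => L (r ^ 2) ^ k * r ^ j) (Set.Ioi (0:ℝ)))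
    (hpos : ∀ k : ℕ, (k = 1 ∨ k = 2) → ∀ j : ℕ,
      0 < ∫ r in Set.Ioi (0:ℝ), L (r ^ 2) ^ k * r ^ j)
    (k : ℕ) (hk : k = 1 ∨ k = 2) (j : Fin d → ℕ) :
    Filter.Tendsto
      (fun h : Fin d → ℝ =>
        ((2:ℝ) ^ d *
            ∏ ℓ, ∫ θ in Set.Ioc (0:ℝ) Real.pi,
              L ((1 - Real.cos θ) / (h ℓ) ^ 2) ^ k * θ ^ (j ℓ)) /
          ((∏ ℓ, (h ℓ) ^ (j ℓ)) * ∏ ℓ, h ℓ))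
      (nhdsWithin 0 {h : Fin d → ℝ | ∀ ℓ, 0 < h ℓ})
      (nhds ((2:ℝ) ^ (((3 * d + ∑ ℓ, j ℓ : ℕ) : ℝ) / 2) *
        ∏ ℓ, ∫ r in Set.Ioi (0:ℝ), L (r ^ 2) ^ k * r ^ (j ℓ))) :=
  stmt_13_general d L hmono hnn hint k hk j
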